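/- For twice continuously differentiable functions f, g on an interval I with g'' > 0, if f''(t) = t·g''(t) for all t in I, then for all a, b in I with a ≠ b, the quotient (f(a) + f(b) - 2f((a+b)/2)) / (g(a) + g(b) - 2g((a+b)/2)) lies between min{a,b} and max{a,b}. -/

import Mathlib

/-!
On `[a, b]` the hypothesis reads `f'' - a g'' = (t - a) g'' ≥ 0` and `b g'' - f'' = (b - t) g'' ≥ 0`,
so `f - a g` and `b g - f` are convex there. The Jensen functional is linear in the function and
nonnegative on convex functions, whence `a J(g) ≤ J(f) ≤ b J(g)`, while `J(g) > 0` by strict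
convexity of `g`.
-/

open Set

noncomputable def jensenFunctional (f : ℝ → ℝ) (a b : ℝ) : ℝ :=
  f a + f b - 2 * f ((a + b) / 2)

lemma jensenFunctional_comm (f : ℝ → ℝ) (a b : ℝ) :
    jensenFunctional f a b = jensenFunctional f b a := by
  simp only [jensenFunctional, add_comm a b, add_comm (f a)]

lemma jensenFunctional_const_mul (c : ℝ) (f : ℝ → ℝ) (a b : ℝ) :
    jensenFunctional (fun t => c * f t) a b = c * jensenFunctional f a b := by
  simp only [jensenFunctional]
  ring

lemma jensenFunctional_sub (f g : ℝ → ℝ) (a b : ℝ) :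
    jensenFunctional (fun t => f t - g t) a b = jensenFunctional f a b - jensenFunctional g a b := by
  simp only [jensenFunctional]
  ring

lemma midpoint_eq_half_smul_add_half_smul (a b : ℝ) :
    (1 / 2 : ℝ) • a + (1 / 2 : ℝ) • b = (a + b) / 2 := by
  simp only [smul_eq_mul]
  ring

lemma ConvexOn.jensenFunctional_nonneg {f : ℝ → ℝ} {a b : ℝ} (hab : a ≤ b)
    (hf : ConvexOn ℝ (Icc a b) f) : 0 ≤ jensenFunctional f a b := by
  have h := hf.2 (left_mem_Icc.2 hab) (right_mem_Icc.2 hab) (by norm_num : (0 : ℝ) ≤ 1 / 2)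
    (by norm_num : (0 : ℝ) ≤ 1 / 2) (by norm_num)
  rw [midpoint_eq_half_smul_add_half_smul, smul_eq_mul, smul_eq_mul] at h
  unfold jensenFunctional
  linarith

lemma StrictConvexOn.jensenFunctional_pos {f : ℝ → ℝ} {a b : ℝ} (hab : a < b)
    (hf : StrictConvexOn ℝ (Icc a b) f) : 0 < jensenFunctional f a b := by
  have h := hf.2 (left_mem_Icc.2 hab.le) (right_mem_Icc.2 hab.le) hab.ne
    (by norm_num : (0 : ℝ) < 1 / 2) (by norm_num : (0 : ℝ) < 1 / 2) (by norm_num)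
  rw [midpoint_eq_half_smul_add_half_smul, smul_eq_mul, smul_eq_mul] at h
  unfold jensenFunctional
  linarith

lemma ContDiffOn.hasDerivAt_of_mem_interior {f : ℝ → ℝ} {s : Set ℝ} {x : ℝ}
    (hf : ContDiffOn ℝ 2 f s) (hx : x ∈ interior s) : HasDerivAt f (deriv f x) x :=
  ((hf.differentiableOn (by norm_num)).differentiableAt
    (mem_interior_iff_mem_nhds.1 hx)).hasDerivAt

lemma ContDiffOn.hasDerivAt_deriv_of_mem_interior {f : ℝ → ℝ} {s : Set ℝ} {x : ℝ}
    (hf : ContDiffOn ℝ 2 f s) (hx : x ∈ interior s) :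
    HasDerivAt (deriv f) (deriv (deriv f) x) x := by
  have hf' : ContDiffOn ℝ 1 (deriv f) (interior s) :=
    (hf.mono interior_subset).deriv_of_isOpen isOpen_interior (by norm_num)
  exact ((hf'.differentiableOn one_ne_zero).differentiableAt
    (isOpen_interior.mem_nhds hx)).hasDerivAt

lemma jensenFunctional_le_of_deriv2_le {f g : ℝ → ℝ} {a b : ℝ} (hab : a ≤ b)
    (hf : ContDiffOn ℝ 2 f (Icc a b)) (hg : ContDiffOn ℝ 2 g (Icc a b))
    (h : ∀ t ∈ Ioo a b, deriv (deriv f) t ≤ deriv (deriv g) t) :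
    jensenFunctional f a b ≤ jensenFunctional g a b := by
  have hconv : ConvexOn ℝ (Icc a b) (fun t => g t - f t) := by
    refine convexOn_of_hasDerivWithinAt2_nonneg (convex_Icc a b)
      (f' := fun t => deriv g t - deriv f t)
      (f'' := fun t => deriv (deriv g) t - deriv (deriv f) t)
      (hg.continuousOn.sub hf.continuousOn) (fun t ht => ?_) (fun t ht => ?_) (fun t ht => ?_)
    · exact ((hg.hasDerivAt_of_mem_interior ht).sub
        (hf.hasDerivAt_of_mem_interior ht)).hasDerivWithinAt
    · exact ((hg.hasDerivAt_deriv_of_mem_interior ht).sub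
        (hf.hasDerivAt_deriv_of_mem_interior ht)).hasDerivWithinAt
    · rw [interior_Icc] at ht
      exact sub_nonneg.2 (h t ht)
  have := hconv.jensenFunctional_nonneg hab
  rw [jensenFunctional_sub] at this
  linarith

lemma deriv_deriv_const_mul (c : ℝ) (f : ℝ → ℝ) :
    deriv (deriv fun t => c * f t) = fun t => c * deriv (deriv f) t := by
  rw [deriv_const_mul_field', deriv_const_mul_field']

lemma div_jensenFunctional_mem_Icc {f g : ℝ → ℝ} {a b : ℝ} (hab : a < b)
    (hf : ContDiffOn ℝ 2 f (Icc a b)) (hg : ContDiffOn ℝ 2 g (Icc a b))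
    (hg'' : ∀ t ∈ Ioo a b, 0 < deriv (deriv g) t)
    (hfg : ∀ t ∈ Ioo a b, deriv (deriv f) t = t * deriv (deriv g) t) :
    jensenFunctional f a b / jensenFunctional g a b ∈ Icc a b := by
  have hJg : 0 < jensenFunctional g a b :=
    (strictConvexOn_of_deriv2_pos (convex_Icc a b) hg.continuousOn fun t ht => by
      rw [interior_Icc] at ht
      simpa using hg'' t ht).jensenFunctional_pos hab
  have hlower : a * jensenFunctional g a b ≤ jensenFunctional f a b := by
    rw [← jensenFunctional_const_mul]
    refine jensenFunctional_le_of_deriv2_le hab.le (contDiffOn_const.mul hg) hf fun t ht => ?_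
    rw [deriv_deriv_const_mul, hfg t ht]
    exact mul_le_mul_of_nonneg_right ht.1.le (hg'' t ht).le
  have hupper : jensenFunctional f a b ≤ b * jensenFunctional g a b := by
    rw [← jensenFunctional_const_mul]
    refine jensenFunctional_le_of_deriv2_le hab.le hf (contDiffOn_const.mul hg) fun t ht => ?_
    rw [deriv_deriv_const_mul, hfg t ht]
    exact mul_le_mul_of_nonneg_right ht.2.le (hg'' t ht).le
  exact ⟨(le_div_iff₀ hJg).2 hlower, (div_le_iff₀ hJg).2 hupper⟩

theorem stmt0 (I : Set ℝ) (hI : I.OrdConnected) (f g : ℝ → ℝ)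
    (hf : ContDiffOn ℝ 2 f I) (hg : ContDiffOn ℝ 2 g I)
    (hg'' : ∀ t ∈ I, 0 < deriv (deriv g) t)
    (hfg : ∀ t ∈ I, deriv (deriv f) t = t * deriv (deriv g) t) :
    ∀ a ∈ I, ∀ b ∈ I, a ≠ b →
      min a b ≤ (f a + f b - 2 * f ((a + b) / 2)) / (g a + g b - 2 * g ((a + b) / 2)) ∧
      (f a + f b - 2 * f ((a + b) / 2)) / (g a + g b - 2 * g ((a + b) / 2)) ≤ max a b := by
  have key : ∀ a ∈ I, ∀ b ∈ I, a < b →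
      jensenFunctional f a b / jensenFunctional g a b ∈ Icc a b := by
    intro a ha b hb hab
    have hIcc : Icc a b ⊆ I := hI.out ha hb
    exact div_jensenFunctional_mem_Icc hab (hf.mono hIcc) (hg.mono hIcc)
      (fun t ht => hg'' t (hIcc (Ioo_subset_Icc_self ht)))
      (fun t ht => hfg t (hIcc (Ioo_subset_Icc_self ht)))
  intro a ha b hb hab
  change min a b ≤ jensenFunctional f a b / jensenFunctional g a b ∧
    jensenFunctional f a b / jensenFunctional g a b ≤ max a b
  rcases hab.lt_or_gt with hlt | hgt
  · obtain ⟨hlower, hupper⟩ := key a ha b hb hlt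
    exact ⟨min_le_of_left_le hlower, le_max_of_le_right hupper⟩
  · obtain ⟨hlower, hupper⟩ := key b hb a ha hgt
    rw [jensenFunctional_comm f, jensenFunctional_comm g]
    exact ⟨min_le_of_right_le hlower, le_max_of_le_left hupper⟩
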